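/- Let f : {−1,1}^n → {−1,1} be computable by a decision tree T of size s (with s ≥ 2), and let τ > 0. Then there exists a pruning T* of T such that (i) Pr_{x uniform on {−1,1}^n}[f(x) ≠ T*(x)] ≤ τ·log₂ s, and (ii) T* is everywhere τ-influential with respect to f, i.e., for every internal node v of T*, writing i(v) for the variable queried at v, Inf_{i(v)}(f_v) ≥ τ, where f_v is the restriction of f obtained by fixing variables according to the root-to-v path in T*. -/

import Mathlib

/-!
Decision trees over {-1,1}^n, where a point of the cube is encoded as `x : Fin n → Bool`
(`true` encodes 1, `false` encodes -1).
-/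

/-- Decision trees with values in `Y` over `n` boolean variables. -/
inductive DTree (Y : Type) (n : ℕ) : Type
  | leaf : Y → DTree Y n
  | node : Fin n → DTree Y n → DTree Y n → DTree Y n

namespace DTree

variable {Y : Type} {n : ℕ}

/-- The function computed by a decision tree: at a node labeled `i`, follow the right
subtree if `x_i = 1` (`x i = true`) and the left subtree if `x_i = -1` (`x i = false`). -/
def eval : DTree Y n → (Fin n → Bool) → Y
  | .leaf y, _ => y
  | .node i l r, x => if x i then r.eval x else l.eval x

/-- The size of a decision tree is its number of leaves. -/
def size : DTree Y n → ℕ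
  | .leaf _ => 1
  | .node _ l r => l.size + r.size

/-- A pruning of a decision tree is obtained by repeatedly replacing an internal node
by one of its two subtrees. `IsPruning T' T` means `T'` is a pruning of `T`. -/
inductive IsPruning : DTree Y n → DTree Y n → Prop
  | leaf (y : Y) : IsPruning (.leaf y) (.leaf y)
  | node (i : Fin n) {l r l' r' : DTree Y n} :
      IsPruning l' l → IsPruning r' r → IsPruning (.node i l' r') (.node i l r)
  | left {i : Fin n} {l r t : DTree Y n} : IsPruning t l → IsPruning t (.node i l r)
  | right {i : Fin n} {l r t : DTree Y n} : IsPruning t r → IsPruning t (.node i l r)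

end DTree

/-- `Pr_{x uniform}[f(x) ≠ g(x)]` for boolean-valued functions on the cube. -/
noncomputable def probNe {n : ℕ} (f g : (Fin n → Bool) → Bool) : ℝ :=
  (∑ x : Fin n → Bool, if f x = g x then (0 : ℝ) else 1) / 2 ^ n

/-- The influence of variable `i` on `f`: `Pr[f(x) ≠ f(x^{~i})]`, where `x` is uniform and
`x^{~i}` is `x` with its `i`-th coordinate rerandomized (so the rerandomized bit is `true`
or `false` with probability 1/2 each). -/
noncomputable def infl {n : ℕ} (f : (Fin n → Bool) → Bool) (i : Fin n) : ℝ :=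
  (∑ x : Fin n → Bool,
      ((if f x = f (Function.update x i true) then (0 : ℝ) else 1) +
        (if f x = f (Function.update x i false) then (0 : ℝ) else 1)) / 2) / 2 ^ n

/-- `T` is everywhere `τ`-influential with respect to `f`: for every internal node `v` of `T`,
the variable `i(v)` queried at `v` has influence at least `τ` on the restriction `f_v` of `f`
by the root-to-`v` path in `T`. -/
def EwInfl {n : ℕ} (τ : ℝ) : ((Fin n → Bool) → Bool) → DTree Bool n → Prop
  | _, .leaf _ => True
  | f, .node i l r =>
      τ ≤ infl f i ∧
      EwInfl τ (fun x => f (Function.update x i false)) l ∧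
      EwInfl τ (fun x => f (Function.update x i true)) r

/-!
Strengthen the claim to an arbitrary target `g`, not necessarily computed by `T`: some pruning
`Ts` of `T` is everywhere `τ`-influential for `g` and satisfies
`Pr[g ≠ Ts] ≤ Pr[g ≠ T] + τ · log₂ |T|`. Recurse at the root `xᵢ` of `T`, fixing `xᵢ` in both
subtrees. If `Inf_i(g) ≥ τ`, keep the root; the error is the average of the errors of the two
pruned subtrees. Otherwise replace the root by the subtree with the smaller bound: this costs at
most `Inf_i(g) < τ` in error, and is paid for by `log₂` being concave, so that the average of
`log₂ |l|` and `log₂ |r|` is at most `log₂ (|l| + |r|) - 1`.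
-/

open Function (update)

namespace DTree

variable {Y : Type} {n : ℕ}

theorem one_le_size (T : DTree Y n) : 1 ≤ T.size := by
  induction T with
  | leaf => exact le_rfl
  | node _ _ _ ihl _ => simp only [size]; omega

theorem IsPruning.trans {c b a : DTree Y n} (hcb : IsPruning c b) (hba : IsPruning b a) :
    IsPruning c a := by
  induction hba generalizing c with
  | leaf => exact hcb
  | node i _ _ ihl ihr =>
    cases hcb with
    | node _ hl hr => exact .node i (ihl hl) (ihr hr)
    | left h => exact .left (ihl h)
    | right h => exact .right (ihr h)
  | left _ ih => exact .left (ih hcb)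
  | right _ ih => exact .right (ih hcb)

def restrict (i : Fin n) (b : Bool) : DTree Y n → DTree Y n
  | .leaf y => .leaf y
  | .node j l r =>
      if j = i then (if b then restrict i b r else restrict i b l)
      else .node j (restrict i b l) (restrict i b r)

theorem eval_restrict (i : Fin n) (b : Bool) (T : DTree Y n) (x : Fin n → Bool) :
    (T.restrict i b).eval x = T.eval (update x i b) := by
  induction T with
  | leaf => rfl
  | node j l r ihl ihr =>
    by_cases h : j = i
    · subst h
      cases b <;> simp [restrict, eval, ihl, ihr]
    · simp [restrict, h, eval, ihl, ihr]

theorem size_restrict_le (i : Fin n) (b : Bool) (T : DTree Y n) :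
    (T.restrict i b).size ≤ T.size := by
  induction T with
  | leaf => exact le_rfl
  | node j l r ihl ihr =>
    by_cases h : j = i
    · cases b <;> simp only [restrict, h, if_true, if_false, size, Bool.false_eq_true] <;> omega
    · simp only [restrict, h, if_false, size]; omega

theorem isPruning_restrict (i : Fin n) (b : Bool) (T : DTree Y n) :
    IsPruning (T.restrict i b) T := by
  induction T with
  | leaf y => exact .leaf y
  | node j l r ihl ihr =>
    by_cases h : j = i
    · cases b
      · simpa [restrict, h] using IsPruning.left ihl
      · simpa [restrict, h] using IsPruning.right ihr
    · simpa [restrict, h] using IsPruning.node j ihl ihr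

def Avoids (i : Fin n) : DTree Y n → Prop
  | .leaf _ => True
  | .node j l r => j ≠ i ∧ l.Avoids i ∧ r.Avoids i

theorem avoids_restrict (i : Fin n) (b : Bool) (T : DTree Y n) : (T.restrict i b).Avoids i := by
  induction T with
  | leaf => trivial
  | node j l r ihl ihr =>
    by_cases h : j = i
    · cases b <;> simpa [restrict, h]
    · simpa [restrict, h, Avoids] using ⟨ihl, ihr⟩

theorem Avoids.of_isPruning {i : Fin n} {T' T : DTree Y n} (h : IsPruning T' T)
    (hT : T.Avoids i) : T'.Avoids i := by
  induction h with
  | leaf => trivial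
  | node _ _ _ ihl ihr => exact ⟨hT.1, ihl hT.2.1, ihr hT.2.2⟩
  | left _ ih => exact ih hT.2.1
  | right _ ih => exact ih hT.2.2

theorem restrict_eq_self_of_avoids {i : Fin n} (b : Bool) {T : DTree Y n} (hT : T.Avoids i) :
    T.restrict i b = T := by
  induction T with
  | leaf => rfl
  | node j l r ihl ihr => simp [restrict, hT.1, ihl hT.2.1, ihr hT.2.2]

end DTree

section Cube

variable {n : ℕ}

theorem sum_eq_half_sum_update (i : Fin n) (H : (Fin n → Bool) → ℝ) :
    ∑ x, H x = (∑ x, (H (update x i false) + H (update x i true))) / 2 := by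
  let e := (Equiv.piSplitAt i fun _ : Fin n => Bool).symm
  have update_e (c b : Bool) (y : { j // j ≠ i } → Bool) : update (e (c, y)) i b = e (b, y) := by
    funext j
    by_cases h : j = i
    · subst h; simp [e, Equiv.piSplitAt_symm_apply]
    · simp [e, Equiv.piSplitAt_symm_apply, h]
  rw [← e.sum_comp, ← e.sum_comp, Fintype.sum_prod_type, Fintype.sum_prod_type]
  simp only [Fintype.sum_bool, update_e, ← Finset.sum_add_distrib, Finset.sum_div]
  exact Finset.sum_congr rfl fun _ _ => by ring

theorem probNe_eq_half_add_update (g h : (Fin n → Bool) → Bool) (i : Fin n) :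
    probNe g h = (probNe (fun x => g (update x i false)) (fun x => h (update x i false)) +
      probNe (fun x => g (update x i true)) (fun x => h (update x i true))) / 2 := by
  simp only [probNe]
  rw [sum_eq_half_sum_update i, Finset.sum_add_distrib]
  ring

theorem probNe_self (g : (Fin n → Bool) → Bool) : probNe g g = 0 := by
  simp [probNe]

theorem probNe_triangle (f g h : (Fin n → Bool) → Bool) :
    probNe f h ≤ probNe f g + probNe g h := by
  simp only [probNe, ← add_div, ← Finset.sum_add_distrib]
  gcongr with x
  by_cases f x = g x <;> by_cases g x = h x <;> by_cases f x = h x <;> simp_all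

/-- Conditioning on `xᵢ`, `Pr[g(x) ≠ g(x^{i ↦ b})]` is half of `Pr[g(x^{i ↦ 0}) ≠ g(x^{i ↦ 1})]`
for either `b`, and `infl g i` is the average of these over `b`. -/
theorem probNe_update_eq_infl (g : (Fin n → Bool) → Bool) (i : Fin n) (b : Bool) :
    probNe g (fun x => g (update x i b)) = infl g i := by
  simp only [probNe, infl]
  rw [sum_eq_half_sum_update i, sum_eq_half_sum_update i (fun x => (_ + _) / 2)]
  congr 2
  refine Finset.sum_congr rfl fun x _ => ?_
  simp only [Function.update_idem]
  by_cases h : g (update x i false) = g (update x i true) <;> cases b <;> simp [h, eq_comm] <;>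
    norm_num

theorem probNe_le_infl_add (g h : (Fin n → Bool) → Bool) (i : Fin n) (b : Bool) :
    probNe g h ≤ infl g i + probNe (fun x => g (update x i b)) h :=
  probNe_update_eq_infl g i b ▸ probNe_triangle _ _ _

theorem probNe_node (g : (Fin n → Bool) → Bool) (i : Fin n) (l r : DTree Bool n) :
    probNe g (DTree.node i l r).eval =
      (probNe (fun x => g (update x i false)) (l.restrict i false).eval +
        probNe (fun x => g (update x i true)) (r.restrict i true).eval) / 2 := by
  rw [probNe_eq_half_add_update g _ i]
  congr 3 <;> funext x <;> simp [DTree.eval, DTree.eval_restrict]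

end Cube

theorem logb_two_half_add_add_one_le {a b : ℝ} (ha : 0 < a) (hb : 0 < b) :
    (Real.logb 2 a + Real.logb 2 b) / 2 + 1 ≤ Real.logb 2 (a + b) := by
  have amgm : Real.logb 2 (a * b * 2 ^ 2) ≤ Real.logb 2 ((a + b) ^ 2) :=
    Real.logb_le_logb_of_le one_lt_two (by positivity) (by nlinarith [sq_nonneg (a - b)])
  rw [Real.logb_mul (by positivity) (by positivity), Real.logb_mul ha.ne' hb.ne',
    Real.logb_pow, Real.logb_pow, Real.logb_self_eq_one one_lt_two] at amgm
  push_cast at amgm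
  linarith

section Pruning

open DTree

variable {n : ℕ}

theorem logb_two_size_le {Y : Type} {T' T : DTree Y n} (h : T'.size ≤ T.size) :
    Real.logb 2 T'.size ≤ Real.logb 2 T.size :=
  Real.logb_le_logb_of_le one_lt_two (mod_cast T'.one_le_size) (mod_cast h)

/-- The bound kept by the recursion on the error, with respect to `g`, of a pruning of `T`. -/
noncomputable def errorBudget (τ : ℝ) (g : (Fin n → Bool) → Bool) (T : DTree Bool n) : ℝ :=
  probNe g T.eval + τ * Real.logb 2 T.size

theorem half_add_errorBudget_restrict_add_le {τ : ℝ} (hτ : 0 ≤ τ) (g : (Fin n → Bool) → Bool)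
    (i : Fin n) (l r : DTree Bool n) :
    (errorBudget τ (fun x => g (update x i false)) (l.restrict i false) +
        errorBudget τ (fun x => g (update x i true)) (r.restrict i true)) / 2 + τ ≤
      errorBudget τ g (.node i l r) := by
  have hl := mul_le_mul_of_nonneg_left (logb_two_size_le (l.size_restrict_le i false)) hτ
  have hr := mul_le_mul_of_nonneg_left (logb_two_size_le (r.size_restrict_le i true)) hτ
  have hconcave := mul_le_mul_of_nonneg_left
    (logb_two_half_add_add_one_le (a := l.size) (b := r.size)
      (mod_cast l.one_le_size) (mod_cast r.one_le_size)) hτ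
  simp only [errorBudget, probNe_node, size, Nat.cast_add]
  linarith

theorem errorBudget_le_infl_add (τ : ℝ) (g : (Fin n → Bool) → Bool) (T : DTree Bool n)
    (i : Fin n) (b : Bool) :
    errorBudget τ g T ≤ infl g i + errorBudget τ (fun x => g (update x i b)) T := by
  have := probNe_le_infl_add g T.eval i b
  simp only [errorBudget]
  linarith

theorem exists_isPruning_ewInfl_probNe_le {τ : ℝ} (hτ : 0 ≤ τ) (g : (Fin n → Bool) → Bool) :
    ∀ T : DTree Bool n,
      ∃ Ts, IsPruning Ts T ∧ probNe g Ts.eval ≤ errorBudget τ g T ∧ EwInfl τ g Ts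
  | .leaf y => ⟨.leaf y, .leaf y, by simp [errorBudget, size], trivial⟩
  | .node i l r => by
    have hbudget := half_add_errorBudget_restrict_add_le hτ g i l r
    by_cases hinfl : τ ≤ infl g i
    · obtain ⟨L, hLl, hLerr, hLinfl⟩ :=
        exists_isPruning_ewInfl_probNe_le hτ (fun x => g (update x i false)) (l.restrict i false)
      obtain ⟨R, hRr, hRerr, hRinfl⟩ :=
        exists_isPruning_ewInfl_probNe_le hτ (fun x => g (update x i true)) (r.restrict i true)
      refine ⟨.node i L R, .node i (hLl.trans (isPruning_restrict i false l))
        (hRr.trans (isPruning_restrict i true r)), ?_, hinfl, hLinfl, hRinfl⟩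
      rw [probNe_node, restrict_eq_self_of_avoids _ ((avoids_restrict i false l).of_isPruning hLl),
        restrict_eq_self_of_avoids _ ((avoids_restrict i true r).of_isPruning hRr)]
      linarith
    · push Not at hinfl
      rcases le_total (errorBudget τ (fun x => g (update x i false)) (l.restrict i false))
        (errorBudget τ (fun x => g (update x i true)) (r.restrict i true)) with hle | hle
      · obtain ⟨P, hPl, hPerr, hPinfl⟩ :=
          exists_isPruning_ewInfl_probNe_le hτ g (l.restrict i false)
        refine ⟨P, .left (hPl.trans (isPruning_restrict i false l)), ?_, hPinfl⟩
        linarith [errorBudget_le_infl_add τ g (l.restrict i false) i false]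
      · obtain ⟨P, hPr, hPerr, hPinfl⟩ :=
          exists_isPruning_ewInfl_probNe_le hτ g (r.restrict i true)
        refine ⟨P, .right (hPr.trans (isPruning_restrict i true r)), ?_, hPinfl⟩
        linarith [errorBudget_le_infl_add τ g (r.restrict i true) i true]
termination_by T => T.size
decreasing_by
  all_goals
    have := l.size_restrict_le i false
    have := r.size_restrict_le i true
    have := l.one_le_size
    have := r.one_le_size
    simp only [size]
    omega

end Pruning

theorem stmt0_general {n : ℕ} (s : ℕ) (τ : ℝ) (hτ : 0 < τ)
    (f : (Fin n → Bool) → Bool) (T : DTree Bool n)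
    (hsize : T.size = s) (hTf : ∀ x, T.eval x = f x) :
    ∃ Tstar : DTree Bool n, DTree.IsPruning Tstar T ∧
      probNe f Tstar.eval ≤ τ * Real.logb 2 s ∧
      EwInfl τ f Tstar := by
  obtain ⟨Ts, hpruning, herr, hinfl⟩ := exists_isPruning_ewInfl_probNe_le hτ.le f T
  have hT : T.eval = f := funext hTf
  refine ⟨Ts, hpruning, ?_, hinfl⟩
  simpa [errorBudget, hT, probNe_self, hsize] using herr

/-- **Pruning lemma (realizable setting).** If `f` is computed by a decision tree `T` of size
`s ≥ 2` and `τ > 0`, then there is a pruning `T*` of `T` with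
`Pr[f(x) ≠ T*(x)] ≤ τ · log₂ s` that is everywhere `τ`-influential with respect to `f`. -/
theorem stmt0 {n : ℕ} (s : ℕ) (hs : 2 ≤ s) (τ : ℝ) (hτ : 0 < τ)
    (f : (Fin n → Bool) → Bool) (T : DTree Bool n)
    (hsize : T.size = s) (hTf : ∀ x, T.eval x = f x) :
    ∃ Tstar : DTree Bool n, DTree.IsPruning Tstar T ∧
      probNe f Tstar.eval ≤ τ * Real.logb 2 s ∧
      EwInfl τ f Tstar :=
  stmt0_general s τ hτ f T hsize hTf
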